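/- arXiv:1909.13290 — 2 statements merged into one kernel-verified Lean document; each statement's English description precedes it below -/
import Mathlib

section
/- Let k ∈ ℕ, let p ≥ 0 be a real number, and let F : Γ → ℂ satisfy ∑_{σ ∈ Γ} λ_σ^{-2p} |F(σ)|² < ∞. Then ∑_{σ ∈ Γ} λ_σ^{-2p} |(𝔞_k† F)(σ)|² converges and ‖𝔞_k† F‖_{-p} ≤ (1+k)^{-p} · ‖F‖_{-p}; that is, S_p* is invariant under the creation operator 𝔞_k†, which is bounded on it with norm at most (1+k)^{-p}. -/
open scoped BigOperators

/-- `λ_σ = ∏_{k ∈ σ} (k+1)`, with `λ_∅ = 1`. -/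
noncomputable def lam (σ : Finset ℕ) : ℝ := ∏ k ∈ σ, ((k : ℝ) + 1)

/-- The creation operator: `(𝔞_k† F)(σ) = F(σ \ {k})` if `k ∈ σ`, else `0`. -/
def cre (k : ℕ) (F : Finset ℕ → ℂ) : Finset ℕ → ℂ :=
  fun σ => if k ∈ σ then F (σ.erase k) else 0

/-!
Since `λ_σ = (1 + k) λ_{σ \ {k}}` whenever `k ∈ σ`, the weighted square `λ_σ^{-2p} |𝔞_k† F(σ)|²`
is `(1 + k)^{-2p}` times the term of `‖F‖_{-p}²` at `σ \ {k}` when `k ∈ σ`, and vanishes otherwise.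
As `σ ↦ σ \ {k}` is injective on the sets containing `k`, the series for `‖𝔞_k† F‖_{-p}²` is
`(1 + k)^{-2p}` times a subseries of the one for `‖F‖_{-p}²`.
-/

namespace Finset

variable {α : Type*} [DecidableEq α] (a : α) {f : Finset α → ℝ}

lemma injective_insert_subtype_notMem :
    Function.Injective fun τ : {τ : Finset α // a ∉ τ} => insert a τ.1 := by
  rintro ⟨τ, hτ⟩ ⟨υ, hυ⟩ h
  simpa [erase_insert hτ, erase_insert hυ] using congrArg (erase · a) h

lemma support_ite_mem_erase_subset :
    Function.support (fun σ => if a ∈ σ then f (σ.erase a) else 0) ⊆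
      Set.range fun τ : {τ : Finset α // a ∉ τ} => insert a τ.1 := by
  intro σ hσ
  have ha : a ∈ σ := by_contra fun ha => hσ (if_neg ha)
  exact ⟨⟨σ.erase a, notMem_erase a σ⟩, insert_erase ha⟩

lemma ite_mem_erase_insert {τ : Finset α} (hτ : a ∉ τ) :
    (if a ∈ insert a τ then f ((insert a τ).erase a) else 0) = f τ := by
  rw [if_pos (mem_insert_self a τ), erase_insert hτ]

lemma summable_ite_mem_erase (hf : Summable f) :
    Summable fun σ : Finset α => if a ∈ σ then f (σ.erase a) else 0 := by
  rw [← (injective_insert_subtype_notMem a).summable_iff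
    fun σ hσ => Function.notMem_support.1 fun h => hσ (support_ite_mem_erase_subset a h)]
  exact (hf.subtype _).congr fun τ => (ite_mem_erase_insert a τ.2).symm

lemma tsum_ite_mem_erase_le (hf₀ : ∀ σ, 0 ≤ f σ) (hf : Summable f) :
    ∑' σ : Finset α, (if a ∈ σ then f (σ.erase a) else 0) ≤ ∑' σ, f σ := by
  rw [← (injective_insert_subtype_notMem a).tsum_eq (support_ite_mem_erase_subset a),
    tsum_congr fun τ => ite_mem_erase_insert a τ.2]
  exact hf.tsum_subtype_le f {τ | a ∉ τ} hf₀

end Finset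

lemma lam_pos (σ : Finset ℕ) : 0 < lam σ :=
  Finset.prod_pos fun _ _ => by positivity

lemma lam_eq_mul_lam_erase {k : ℕ} {σ : Finset ℕ} (h : k ∈ σ) :
    lam σ = (1 + k) * lam (σ.erase k) := by
  rw [lam, ← Finset.mul_prod_erase σ _ h, add_comm, lam]

lemma lam_rpow_mul_norm_cre_sq (k : ℕ) (s : ℝ) (F : Finset ℕ → ℂ) (σ : Finset ℕ) :
    lam σ ^ s * ‖cre k F σ‖ ^ 2 =
      (1 + k : ℝ) ^ s *
        if k ∈ σ then lam (σ.erase k) ^ s * ‖F (σ.erase k)‖ ^ 2 else 0 := by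
  by_cases hk : k ∈ σ
  · rw [cre, if_pos hk, if_pos hk, lam_eq_mul_lam_erase hk,
      Real.mul_rpow (by positivity) (lam_pos _).le, mul_assoc]
  · simp [cre, hk]

theorem stmt4_general (k : ℕ) (p : ℝ) (F : Finset ℕ → ℂ)
    (hF : Summable (fun σ : Finset ℕ => lam σ ^ (-(2 * p)) * ‖F σ‖ ^ 2)) :
    Summable (fun σ : Finset ℕ => lam σ ^ (-(2 * p)) * ‖cre k F σ‖ ^ 2) ∧
    Real.sqrt (∑' σ : Finset ℕ, lam σ ^ (-(2 * p)) * ‖cre k F σ‖ ^ 2)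
      ≤ (1 + (k : ℝ)) ^ (-p) *
        Real.sqrt (∑' σ : Finset ℕ, lam σ ^ (-(2 * p)) * ‖F σ‖ ^ 2) := by
  have hF₀ : ∀ σ, 0 ≤ lam σ ^ (-(2 * p)) * ‖F σ‖ ^ 2 := fun σ => by
    have := lam_pos σ
    positivity
  have hc : (1 + k : ℝ) ^ (-(2 * p)) = ((1 + k : ℝ) ^ (-p)) ^ 2 := by
    rw [← Real.rpow_mul_natCast (by positivity)]
    ring_nf
  simp_rw [lam_rpow_mul_norm_cre_sq]
  refine ⟨(Finset.summable_ite_mem_erase k hF).mul_left _, ?_⟩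
  rw [Real.sqrt_le_left (by positivity), mul_pow, Real.sq_sqrt (tsum_nonneg hF₀), ← hc,
    tsum_mul_left]
  exact mul_le_mul_of_nonneg_left (Finset.tsum_ite_mem_erase_le k hF₀ hF) (by positivity)

/-- `S_p*` is invariant under `𝔞_k†`, with `‖𝔞_k† F‖_{-p} ≤ (1+k)^{-p} ‖F‖_{-p}`. -/
theorem stmt4 (k : ℕ) (p : ℝ) (hp : 0 ≤ p) (F : Finset ℕ → ℂ)
    (hF : Summable (fun σ : Finset ℕ => lam σ ^ (-(2 * p)) * ‖F σ‖ ^ 2)) :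
    Summable (fun σ : Finset ℕ => lam σ ^ (-(2 * p)) * ‖cre k F σ‖ ^ 2) ∧
    Real.sqrt (∑' σ : Finset ℕ, lam σ ^ (-(2 * p)) * ‖cre k F σ‖ ^ 2)
      ≤ (1 + (k : ℝ)) ^ (-p) *
        Real.sqrt (∑' σ : Finset ℕ, lam σ ^ (-(2 * p)) * ‖F σ‖ ^ 2) :=
  stmt4_general k p F hF
end

section
/- Let p ≥ 0 be a real number and let F : Γ → ℂ satisfy ∑_{σ ∈ Γ} λ_σ^{-2p} |F(σ)|² < ∞. Set Ψ_n = ∑_{k=0}^{n} 𝔈_k(𝔞_k†(𝔞_k F)). Then ∑_{σ ∈ Γ} λ_σ^{-2p} |Ψ_n(σ) − (F(σ) − (𝔈 F)(σ))|² → 0 as n → ∞; i.e., the Clark–Ocone partial sums converge to F − 𝔈F in the ‖·‖_{-p} norm of S_p*. -/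
/-!
A nonempty `σ` has exactly one `k` with `k ∈ σ` and `σ ⊆ {0, …, k}`, namely `max σ`, so only the
term `k = max σ` of `Ψ_n(σ)` survives: `Ψ_n = F − 𝔈F` on the subsets of `{0, …, n}` and
`Ψ_n = 0` elsewhere. The error `‖Ψ_n − (F − 𝔈F)‖²_{-p}` is therefore the tail of the series
`∑_σ λ_σ^{-2p} |F(σ)|²` outside the powerset of `{0, …, n}`, and these powersets exhaust `Γ`.
-/

open scoped BigOperators

/-- The annihilation operator: `(𝔞_k F)(σ) = F(σ ∪ {k})` if `k ∉ σ`, else `0`. -/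
def ann (k : ℕ) (F : Finset ℕ → ℂ) : Finset ℕ → ℂ :=
  fun σ => if k ∈ σ then 0 else F (insert k σ)

/-- The conditional expectation operator:
`(𝔈_k F)(σ) = F(σ)` if every `j ∈ σ` satisfies `j ≤ k`, else `0`. -/
def cexp (k : ℕ) (F : Finset ℕ → ℂ) : Finset ℕ → ℂ :=
  fun σ => if ∀ j ∈ σ, j ≤ k then F σ else 0

/-- The expectation operator: `(𝔈 F)(σ) = F(∅)` if `σ = ∅`, else `0`. -/
def expec (F : Finset ℕ → ℂ) : Finset ℕ → ℂ :=
  fun σ => if σ = ∅ then F ∅ else 0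

open Filter Topology Finset

theorem tendsto_tsum_indicator_compl_zero {ι β G : Type*} [TopologicalSpace G] [AddCommGroup G]
    [IsTopologicalAddGroup G] (f : β → G) {s : ι → Finset β} {l : Filter ι}
    (hs : Tendsto s l atTop) :
    Tendsto (fun i => ∑' b, (↑(s i) : Set β)ᶜ.indicator f b) l (𝓝 0) :=
  ((tendsto_tsum_compl_atTop_zero f).comp hs).congr fun i => tsum_subtype ((↑(s i) : Set β)ᶜ) f

theorem cexp_cre_ann_apply (k : ℕ) (F : Finset ℕ → ℂ) (σ : Finset ℕ) :
    cexp k (cre k (ann k F)) σ = if k ∈ σ ∧ ∀ j ∈ σ, j ≤ k then F σ else 0 := by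
  by_cases hk : k ∈ σ
  · simp [cexp, cre, ann, hk, insert_erase hk]
  · simp [cexp, cre, hk]

theorem sum_range_cexp_cre_ann_apply (m : ℕ) (F : Finset ℕ → ℂ) (σ : Finset ℕ) :
    ∑ k ∈ range m, cexp k (cre k (ann k F)) σ =
      if σ ⊆ range m then F σ - expec F σ else 0 := by
  simp only [cexp_cre_ann_apply]
  rcases σ.eq_empty_or_nonempty with rfl | hσ
  · simp [expec]
  have hmax (k : ℕ) : (k ∈ σ ∧ ∀ j ∈ σ, j ≤ k) ↔ k = σ.max' hσ :=
    ⟨fun hk => le_antisymm (le_max' σ k hk.1) (hk.2 _ (max'_mem σ hσ)),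
      fun hk => hk ▸ ⟨max'_mem σ hσ, fun j hj => le_max' σ j hj⟩⟩
  have hsub : σ ⊆ range m ↔ σ.max' hσ ∈ range m := by
    simp only [mem_range, max'_lt_iff, subset_iff]
  simp only [hmax, sum_ite_eq', hsub, expec, hσ.ne_empty, if_false, sub_zero]

theorem stmt11_general (p : ℝ) (F : Finset ℕ → ℂ) :
    Filter.Tendsto
      (fun n : ℕ => ∑' σ : Finset ℕ, lam σ ^ (-(2 * p)) *
        ‖(∑ k ∈ Finset.range (n + 1), cexp k (cre k (ann k F)) σ) -
          (F σ - expec F σ)‖ ^ 2)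
      Filter.atTop (nhds 0) := by
  have herror (n : ℕ) (σ : Finset ℕ) :
      lam σ ^ (-(2 * p)) *
        ‖(∑ k ∈ range (n + 1), cexp k (cre k (ann k F)) σ) - (F σ - expec F σ)‖ ^ 2 =
      (↑(range (n + 1)).powerset : Set (Finset ℕ))ᶜ.indicator
        (fun σ => lam σ ^ (-(2 * p)) * ‖F σ‖ ^ 2) σ := by
    rw [sum_range_cexp_cre_ann_apply]
    by_cases hσ : σ ⊆ range (n + 1)
    · rw [Set.indicator_of_notMem (Set.notMem_compl_iff.2 (mem_coe.2 (mem_powerset.2 hσ)))]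
      simp [hσ]
    · have hne : σ ≠ ∅ := fun h => hσ (h ▸ empty_subset _)
      rw [Set.indicator_of_mem (mt mem_powerset.1 hσ)]
      simp [hσ, expec, hne]
  simp only [herror]
  exact tendsto_tsum_indicator_compl_zero _ <| tendsto_finset_powerset_atTop_atTop.comp <|
    tendsto_finset_range.comp (tendsto_add_atTop_nat 1)

/-- If `F ∈ S_p*`, the Clark–Ocone partial sums `Ψ_n = ∑_{k=0}^n 𝔈_k 𝔞_k† 𝔞_k F`
converge to `F − 𝔈F` in the `‖·‖_{-p}` norm. -/
theorem stmt11 (p : ℝ) (hp : 0 ≤ p) (F : Finset ℕ → ℂ)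
    (hF : Summable (fun σ : Finset ℕ => lam σ ^ (-(2 * p)) * ‖F σ‖ ^ 2)) :
    Filter.Tendsto
      (fun n : ℕ => ∑' σ : Finset ℕ, lam σ ^ (-(2 * p)) *
        ‖(∑ k ∈ Finset.range (n + 1), cexp k (cre k (ann k F)) σ) -
          (F σ - expec F σ)‖ ^ 2)
      Filter.atTop (nhds 0) :=
  stmt11_general p F
end
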